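/- Let (X, μ) be a measure space, let p, q : X → (0,∞) be measurable, and let f, g : (0,∞) → ℝ be strictly increasing differentiable functions with f′ > 0 and g′ > 0 such that f ∘ g⁻¹ is strictly convex on the range of g. Assume the function x ↦ E_f(p(x),q(x)) − E_g(p(x),q(x)) is μ-integrable. Then the quasi-arithmetic 1-divergence I₁^{f,g}[p:q] = ∫ (E_f(p,q) − E_g(p,q)) dμ satisfies I₁^{f,g}[p:q] ≥ 0, and I₁^{f,g}[p:q] = 0 if and only if p = q μ-almost everywhere. -/

import Mathlib

/-!
With φ = f ∘ g⁻¹, the quotient (f t − f a)/(g t − g a) is the secant slope of the strictly convex φ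
between g a and g t, hence strictly increasing in t, and it tends to f′(a)/g′(a) as t → a. So
f′(a)/g′(a) lies strictly between the slopes on either side of a, which says exactly that
E_g(a,b) < E_f(a,b) for b ≠ a. The integrand of I₁^{f,g}[p:q] is therefore nonnegative and vanishes
exactly where p = q.
-/

open Set Filter Topology MeasureTheory

section Order

variable {α β : Type*} [LinearOrder α] [TopologicalSpace α] [OrderTopology α] [DenselyOrdered α]
  [LinearOrder β] [TopologicalSpace β] [OrderClosedTopology β] {r : α → β} {a b : α} {L : β}

theorem StrictMonoOn.lt_of_tendsto_nhdsGT (hr : StrictMonoOn r (Ioc a b)) (hab : a < b)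
    (hL : Tendsto r (𝓝[>] a) (𝓝 L)) : L < r b := by
  obtain ⟨c, hac, hcb⟩ := exists_between hab
  have : (𝓝[>] a).NeBot := nhdsGT_neBot_of_exists_gt ⟨b, hab⟩
  have hLc : L ≤ r c := le_of_tendsto hL <| by
    filter_upwards [Ioo_mem_nhdsGT hac] with t ht
    exact (hr ⟨ht.1, ht.2.le.trans hcb.le⟩ ⟨hac, hcb.le⟩ ht.2).le
  exact hLc.trans_lt (hr ⟨hac, hcb.le⟩ ⟨hab, le_rfl⟩ hcb)

theorem StrictMonoOn.lt_of_tendsto_nhdsLT (hr : StrictMonoOn r (Ico b a)) (hba : b < a)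
    (hL : Tendsto r (𝓝[<] a) (𝓝 L)) : r b < L := by
  obtain ⟨c, hbc, hca⟩ := exists_between hba
  have : (𝓝[<] a).NeBot := nhdsLT_neBot_of_exists_lt ⟨b, hba⟩
  have hcL : r c ≤ L := ge_of_tendsto hL <| by
    filter_upwards [Ioo_mem_nhdsLT hca] with t ht
    exact (hr ⟨hbc.le, hca⟩ ⟨hbc.le.trans ht.1.le, ht.2⟩ ht.1).le
  exact (hr ⟨le_rfl, hba⟩ ⟨hbc.le, hca⟩ hbc).trans_le hcL

end Order

theorem HasDerivAt.tendsto_sub_div_sub {f g : ℝ → ℝ} {f' g' a : ℝ} (hf : HasDerivAt f f' a)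
    (hg : HasDerivAt g g' a) (hg' : g' ≠ 0) :
    Tendsto (fun t => (f t - f a) / (g t - g a)) (𝓝[≠] a) (𝓝 (f' / g')) := by
  refine ((hasDerivAt_iff_tendsto_slope.mp hf).div
    (hasDerivAt_iff_tendsto_slope.mp hg) hg').congr' ?_
  filter_upwards [self_mem_nhdsWithin] with t ht
  rw [Pi.div_apply, slope_def_field, slope_def_field,
    div_div_div_cancel_right₀ (sub_ne_zero.mpr ht)]

theorem StrictConvexOn.strictMonoOn_secant_comp {s : Set ℝ} {φ g : ℝ → ℝ}
    (hφ : StrictConvexOn ℝ (g '' s) φ) (hg : StrictMonoOn g s) {a : ℝ} (ha : a ∈ s) :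
    StrictMonoOn (fun t => (φ (g t) - φ (g a)) / (g t - g a)) (s \ {a}) :=
  fun _ hx _ hy hxy => hφ.secant_strict_mono (mem_image_of_mem g ha) (mem_image_of_mem g hx.1)
    (mem_image_of_mem g hy.1) (hg.injOn.ne hx.1 ha hx.2) (hg.injOn.ne hy.1 ha hy.2)
    (hg hx.1 hy.1 hxy)

theorem sub_div_lt_sub_div_of_strictConvexOn_comp {s : Set ℝ} (hs : s.OrdConnected)
    {f g φ : ℝ → ℝ} {f' g' a b : ℝ} (hφ : StrictConvexOn ℝ (g '' s) φ) (hg : StrictMonoOn g s)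
    (hφg : EqOn (φ ∘ g) f s) (hf : HasDerivAt f f' a) (hgd : HasDerivAt g g' a)
    (hf' : 0 < f') (hg' : 0 < g') (ha : a ∈ s) (hb : b ∈ s) (hab : a ≠ b) :
    (g b - g a) / g' < (f b - f a) / f' := by
  set r := fun t => (f t - f a) / (g t - g a)
  have hr : StrictMonoOn r (s \ {a}) := by
    refine (hφ.strictMonoOn_secant_comp hg ha).congr fun t ht => ?_
    simp only [r, ← hφg ht.1, ← hφg ha, Function.comp_apply]
  have hlim : Tendsto r (𝓝[≠] a) (𝓝 (f' / g')) := hf.tendsto_sub_div_sub hgd hg'.ne'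
  suffices f' / g' * (g b - g a) < f b - f a by
    rw [div_lt_div_iff₀ hg' hf']
    rw [div_mul_eq_mul_div, div_lt_iff₀ hg'] at this
    linarith
  rcases hab.lt_or_gt with hab | hba
  · have hrb : f' / g' < r b :=
      (hr.mono fun t ht => ⟨hs.out ha hb (Ioc_subset_Icc_self ht), ht.1.ne'⟩).lt_of_tendsto_nhdsGT
        hab (hlim.mono_left (nhdsWithin_mono a fun t ht => ne_of_gt ht))
    rwa [lt_div_iff₀ (sub_pos.mpr (hg ha hb hab))] at hrb
  · have hrb : r b < f' / g' :=
      (hr.mono fun t ht => ⟨hs.out hb ha (Ico_subset_Icc_self ht), ht.2.ne⟩).lt_of_tendsto_nhdsLT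
        hba (hlim.mono_left (nhdsWithin_mono a fun t ht => ne_of_lt ht))
    rwa [div_lt_iff_of_neg (sub_neg.mpr (hg hb ha hba))] at hrb

theorem integral_nonneg_and_eq_zero_iff_ae_eq {X Y : Type*} [MeasurableSpace X] {μ : Measure X}
    {h : X → ℝ} {p q : X → Y} (hint : Integrable h μ) (hpos : ∀ x, p x ≠ q x → 0 < h x)
    (hzero : ∀ x, p x = q x → h x = 0) :
    0 ≤ ∫ x, h x ∂μ ∧ (∫ x, h x ∂μ = 0 ↔ p =ᵐ[μ] q) := by
  have hiff : ∀ x, h x = 0 ↔ p x = q x := fun x =>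
    ⟨fun h0 => by_contra fun hne => (hpos x hne).ne' h0, hzero x⟩
  have hnonneg : 0 ≤ h := fun x => by
    by_cases hx : p x = q x
    exacts [(hzero x hx).ge, (hpos x hx).le]
  refine ⟨integral_nonneg hnonneg, ?_⟩
  rw [integral_eq_zero_iff_of_nonneg hnonneg hint]
  exact eventually_congr (.of_forall hiff)

theorem qam_one_divergence_nonneg_general {X : Type*} [MeasurableSpace X] (μ : Measure X)
    (p q : X → ℝ)
    (hppos : ∀ x, 0 < p x) (hqpos : ∀ x, 0 < q x)
    (f g f' g' ginv : ℝ → ℝ)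
    (hg_mono : StrictMonoOn g (Ioi 0))
    (hf' : ∀ x ∈ Ioi (0 : ℝ), HasDerivAt f (f' x) x)
    (hg' : ∀ x ∈ Ioi (0 : ℝ), HasDerivAt g (g' x) x)
    (hf'pos : ∀ x ∈ Ioi (0 : ℝ), 0 < f' x)
    (hg'pos : ∀ x ∈ Ioi (0 : ℝ), 0 < g' x)
    (hginv : ∀ x ∈ Ioi (0 : ℝ), ginv (g x) = x)
    (hconv : StrictConvexOn ℝ (g '' Ioi 0) (f ∘ ginv))
    (hint : Integrable
      (fun x => (f (q x) - f (p x)) / f' (p x) - (g (q x) - g (p x)) / g' (p x)) μ) :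
    0 ≤ ∫ x, ((f (q x) - f (p x)) / f' (p x) - (g (q x) - g (p x)) / g' (p x)) ∂μ ∧
      ((∫ x, ((f (q x) - f (p x)) / f' (p x) - (g (q x) - g (p x)) / g' (p x)) ∂μ) = 0 ↔
        p =ᵐ[μ] q) := by
  have hφg : EqOn ((f ∘ ginv) ∘ g) f (Ioi 0) := fun t ht => by
    simp only [Function.comp_apply, hginv t ht]
  refine integral_nonneg_and_eq_zero_iff_ae_eq hint (fun x hne => sub_pos.mpr ?_)
    (fun x heq => by simp only [heq, sub_self, zero_div])
  have ha := hppos x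
  exact sub_div_lt_sub_div_of_strictConvexOn_comp ordConnected_Ioi hconv hg_mono hφg
    (hf' _ ha) (hg' _ ha) (hf'pos _ ha) (hg'pos _ ha) ha (hqpos x) hne

/-- Nonnegativity and identity of indiscernibles for the
quasi-arithmetic 1-divergence I₁^{f,g}[p:q] = ∫ (E_f(p,q) − E_g(p,q)) dμ, where
E_f(a,b) = (f(b) − f(a))/f′(a), for generators f, g strictly increasing
differentiable with positive derivatives and f ∘ g⁻¹ strictly convex on the
range of g. -/
theorem qam_one_divergence_nonneg {X : Type*} [MeasurableSpace X] (μ : Measure X)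
    (p q : X → ℝ) (hp : Measurable p) (hq : Measurable q)
    (hppos : ∀ x, 0 < p x) (hqpos : ∀ x, 0 < q x)
    (f g f' g' ginv : ℝ → ℝ)
    (hf_mono : StrictMonoOn f (Ioi 0)) (hg_mono : StrictMonoOn g (Ioi 0))
    (hf' : ∀ x ∈ Ioi (0 : ℝ), HasDerivAt f (f' x) x)
    (hg' : ∀ x ∈ Ioi (0 : ℝ), HasDerivAt g (g' x) x)
    (hf'pos : ∀ x ∈ Ioi (0 : ℝ), 0 < f' x)
    (hg'pos : ∀ x ∈ Ioi (0 : ℝ), 0 < g' x)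
    (hginv : ∀ x ∈ Ioi (0 : ℝ), ginv (g x) = x)
    (hconv : StrictConvexOn ℝ (g '' Ioi 0) (f ∘ ginv))
    (hint : Integrable
      (fun x => (f (q x) - f (p x)) / f' (p x) - (g (q x) - g (p x)) / g' (p x)) μ) :
    0 ≤ ∫ x, ((f (q x) - f (p x)) / f' (p x) - (g (q x) - g (p x)) / g' (p x)) ∂μ ∧
      ((∫ x, ((f (q x) - f (p x)) / f' (p x) - (g (q x) - g (p x)) / g' (p x)) ∂μ) = 0 ↔
        p =ᵐ[μ] q) :=
  qam_one_divergence_nonneg_general μ p q hppos hqpos f g f' g' ginv hg_mono hf' hg' hf'pos hg'pos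
    hginv hconv hint
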